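/- Let G be a graph on [n]. Then the binomial edge ideal J_G is a radical ideal, and J_G = ⋂_{T ∈ C(G)} P_T(G), where C(G) is the set of subsets T ⊆ [n] with the cut point property for G. -/

import Mathlib

open MvPolynomial

section Defs

variable (K : Type*) [Field K] {V : Type*} [Fintype V] [DecidableEq V]

/-- The variable `x_i`. -/
noncomputable def xv (i : V) : MvPolynomial (Fin 2 × V) K := X (0, i)

/-- The variable `y_i`. -/
noncomputable def yv (i : V) : MvPolynomial (Fin 2 × V) K := X (1, i)

/-- The binomial `x_i y_j - x_j y_i`. -/
noncomputable def binom (i j : V) : MvPolynomial (Fin 2 × V) K :=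
  xv K i * yv K j - xv K j * yv K i

/-- The binomial edge ideal `J_G` of a simple graph `G`. -/
noncomputable def beIdeal (G : SimpleGraph V) : Ideal (MvPolynomial (Fin 2 × V) K) :=
  Ideal.span { f | ∃ i j, G.Adj i j ∧ f = binom K i j }

/-- The graph `G - T`: delete the vertices of `T` (kept as isolated vertices). -/
def delV (G : SimpleGraph V) (T : Finset V) : SimpleGraph V where
  Adj i j := G.Adj i j ∧ i ∉ T ∧ j ∉ T
  symm := ⟨fun i j h => ⟨h.1.symm, h.2.2, h.2.1⟩⟩
  loopless := ⟨fun i h => G.loopless.irrefl i h.1⟩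

/-- `c_G(T)`: the number of connected components of `G - T`. -/
noncomputable def cCount (G : SimpleGraph V) (T : Finset V) : ℕ :=
  Nat.card {c : (delV G T).ConnectedComponent //
    ∃ v, v ∉ T ∧ (delV G T).connectedComponentMk v = c}

/-- The prime ideal `P_T(G) = (x_i, y_i : i ∈ T) + J_{G̃₁} + ⋯ + J_{G̃_c}`,
where the `G̃ᵢ` are complete graphs on the components of `G - T`. -/
noncomputable def PTIdeal (G : SimpleGraph V) (T : Finset V) :
    Ideal (MvPolynomial (Fin 2 × V) K) :=
  Ideal.span ({ f | ∃ i ∈ T, f = xv K i ∨ f = yv K i } ∪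
    { f | ∃ i j, i ∉ T ∧ j ∉ T ∧ i ≠ j ∧ (delV G T).Reachable i j ∧ f = binom K i j })

/-- `T` has the cut point property for `G`. -/
def hasCutPointProperty (G : SimpleGraph V) (T : Finset V) : Prop :=
  ∀ i ∈ T, cCount G (T.erase i) < cCount G T

/-- The height of an ideal: the infimum of the heights of the primes containing it. -/
noncomputable def idealHeight {R : Type*} [CommRing R] (I : Ideal R) : ℕ∞ :=
  ⨅ P : {P : PrimeSpectrum R // I ≤ P.asIdeal}, Order.height P.1

end Defs

/-!
Every `P_T(G)` contains `J_G`, and is prime: it is the kernel of the monomial map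
`x_i ↦ s_C t_i`, `y_i ↦ u_C t_i` (`C` the component of `i` in `G - T`; `x_i, y_i ↦ 0` for
`i ∈ T`), because two monomials with the same image are connected by exchanges
`x_i y_j ↔ x_j y_i` inside components, which are congruent modulo `P_T(G)`.

Conversely `⋂_T P_T(G) ⊆ J_G`, by induction on the number of non-adjacent pairs of non-isolated
vertices. If every component of `G` is a clique, `P_∅(G) = J_G`. Otherwise some vertex `v` has two
non-adjacent neighbours, and Ohtani's lemma `J_G = J_{G_v} ∩ ((x_v, y_v) + J_{G - v})`, where
`G_v` completes the neighbourhood of `v` to a clique, reduces the claim to `G_v` and `G - v`,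
since `P_T(G_v) ⊇ P_{T ∖ v}(G)` and `P_W(G - v) ∋ f(x_v = y_v = 0)` for `f ∈ P_{W ∪ v}(G)`.

Finally, if `i ∈ T` is not a cut point of `G - (T ∖ i)` then `P_{T ∖ i}(G) ⊆ P_T(G)`, so the
intersection may be restricted to sets with the cut point property; an intersection of primes is
radical.
-/

section General

lemma sub_map_mem_mul_span {R F : Type*} [CommRing R] [FunLike F R R] [RingHomClass F R R]
    (κ : F) {I : Ideal R} {S : Set R} (hS : ∀ s ∈ S, κ s = s) (hI : ∀ r, r - κ r ∈ I)
    {m : R} (hm : m ∈ Ideal.span S) : m - κ m ∈ I * Ideal.span S := by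
  induction hm using Submodule.span_induction with
  | mem s hs => simp [hS s hs]
  | zero => simp
  | add x y _ _ hx hy =>
    rw [map_add, add_sub_add_comm]
    exact add_mem hx hy
  | smul c g hg ih =>
    rw [smul_eq_mul, map_mul, show c * g - κ c * κ g = κ c * (g - κ g) + (c - κ c) * g by ring]
    exact add_mem (Ideal.mul_mem_left _ _ ih) (Ideal.mul_mem_mul (hI c) hg)

lemma MvPolynomial.ker_le_of_map_monomial {R σ τ : Type*} [CommRing R]
    (φ : MvPolynomial σ R →ₗ[R] MvPolynomial τ R) (P : (σ →₀ ℕ) → Prop)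
    (F : (σ →₀ ℕ) → τ →₀ ℕ) (hP : ∀ d, P d → φ (monomial d 1) = monomial (F d) 1)
    (hnP : ∀ d, ¬ P d → φ (monomial d 1) = 0) {I : Ideal (MvPolynomial σ R)}
    (h0 : ∀ d, ¬ P d → monomial d 1 ∈ I)
    (h1 : ∀ d d', P d → P d' → F d = F d' → monomial d 1 - monomial d' 1 ∈ I)
    {f : MvPolynomial σ R} (hf : φ f = 0) : f ∈ I := by
  classical
  -- `ψ` sends each monomial of the image back to a chosen preimage; then `f - ψ (φ f) ∈ I`.
  let g : (τ →₀ ℕ) → σ →₀ ℕ := fun e => if h : ∃ d, P d ∧ F d = e then h.choose else 0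
  have hg : ∀ d, P d → P (g (F d)) ∧ F (g (F d)) = F d := fun d hd => by
    have h : ∃ d', P d' ∧ F d' = F d := ⟨d, hd, rfl⟩
    simp only [g, dif_pos h]
    exact h.choose_spec
  let ψ : MvPolynomial τ R →ₗ[R] MvPolynomial σ R :=
    (basisMonomials τ R).constr R fun e => monomial (g e) 1
  have hψ : ∀ e, ψ (monomial e 1) = monomial (g e) 1 := fun e => by
    simpa using (basisMonomials τ R).constr_basis R (fun e => monomial (g e) 1) e
  have key : ∀ f, f - ψ (φ f) ∈ I := by
    intro f
    induction f using MvPolynomial.induction_on' with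
    | monomial d c =>
      rw [show monomial d c = c • monomial d (1 : R) by rw [smul_monomial, smul_eq_mul, mul_one],
        map_smul, map_smul, ← smul_sub]
      refine Submodule.smul_of_tower_mem _ c ?_
      by_cases hd : P d
      · rw [hP d hd, hψ]
        exact h1 d _ hd (hg d hd).1 (hg d hd).2.symm
      · rw [hnP d hd, map_zero, sub_zero]
        exact h0 d hd
    | add p q hp hq =>
      rw [map_add, map_add, add_sub_add_comm]
      exact add_mem hp hq
  simpa [hf] using key f

lemma Finsupp.exists_eq_single_add {α : Type*} {d : α →₀ ℕ} {w : α} (hw : w ∈ d.support) :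
    ∃ d₀, d = Finsupp.single w 1 + d₀ :=
  exists_add_of_le (Finsupp.single_le_iff.2 (Nat.one_le_iff_ne_zero.2
    (Finsupp.mem_support_iff.1 hw)))

lemma Finsupp.le_linearCombination {α β : Type*} (v : α → β →₀ ℕ) {d : α →₀ ℕ} {w : α}
    (hw : w ∈ d.support) : v w ≤ Finsupp.linearCombination ℕ v d := by
  obtain ⟨d₀, rfl⟩ := Finsupp.exists_eq_single_add hw
  simp

lemma Finsupp.exists_mem_support_of_linearCombination_ne_zero {α β : Type*}
    (v : α → β →₀ ℕ) {d : α →₀ ℕ} {y : β} (h : Finsupp.linearCombination ℕ v d y ≠ 0) :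
    ∃ w ∈ d.support, v w y ≠ 0 := by
  rw [Finsupp.linearCombination_apply, Finsupp.sum, Finsupp.finsetSum_apply] at h
  obtain ⟨w, hw, hwy⟩ := Finset.exists_ne_zero_of_sum_ne_zero h
  exact ⟨w, hw, fun h => hwy (by simp [h])⟩

lemma Finsupp.eq_zero_of_linearCombination_eq_zero {α β : Type*} {v : α → β →₀ ℕ}
    (hv : ∀ w, v w ≠ 0) {d : α →₀ ℕ} (h : Finsupp.linearCombination ℕ v d = 0) : d = 0 := by
  by_contra hd
  obtain ⟨w, hw⟩ := Finsupp.support_nonempty_iff.2 hd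
  exact hv w (le_zero_iff.1 (h ▸ Finsupp.le_linearCombination v hw))

end General

section Ideals

variable {K : Type*} [Field K] {V : Type*}

lemma binom_self (i : V) : binom K i i = 0 := sub_self _

lemma binom_swap (i j : V) : binom K j i = -binom K i j :=
  (neg_sub _ _).symm

/-- The Laplace expansion of a `3 × 3` determinant with a repeated row. -/
lemma X_mul_binom (a : Fin 2) (i j k : V) :
    X (a, k) * binom K i j = X (a, i) * binom K k j + X (a, j) * binom K i k := by
  fin_cases a <;> simp only [binom, xv, yv, Fin.zero_eta, Fin.mk_one] <;> ring

lemma binom_mem_beIdeal {G : SimpleGraph V} {i j : V} (h : G.Adj i j) :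
    binom K i j ∈ beIdeal K G :=
  Ideal.subset_span ⟨i, j, h, rfl⟩

lemma beIdeal_le {G : SimpleGraph V} {I : Ideal (MvPolynomial (Fin 2 × V) K)}
    (h : ∀ i j, G.Adj i j → binom K i j ∈ I) : beIdeal K G ≤ I := by
  rw [beIdeal, Ideal.span_le]
  rintro f ⟨i, j, hij, rfl⟩
  exact h i j hij

lemma beIdeal_mono {G G' : SimpleGraph V} (h : G ≤ G') : beIdeal K G ≤ beIdeal K G' :=
  beIdeal_le fun _ _ hij => binom_mem_beIdeal (h hij)

variable {G : SimpleGraph V} {T : Finset V}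

lemma PTIdeal_le {I : Ideal (MvPolynomial (Fin 2 × V) K)} (hX : ∀ i ∈ T, ∀ a, X (a, i) ∈ I)
    (hB : ∀ i j, i ∉ T → j ∉ T → (delV G T).Reachable i j → binom K i j ∈ I) :
    PTIdeal K G T ≤ I := by
  rw [PTIdeal, Ideal.span_le]
  rintro f (⟨i, hi, rfl | rfl⟩ | ⟨i, j, hi, hj, -, hij, rfl⟩)
  · exact hX i hi 0
  · exact hX i hi 1
  · exact hB i j hi hj hij

lemma X_mem_PTIdeal {i : V} (hi : i ∈ T) (a : Fin 2) : X (a, i) ∈ PTIdeal K G T := by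
  refine Ideal.subset_span (Or.inl ⟨i, hi, ?_⟩)
  fin_cases a
  exacts [Or.inl rfl, Or.inr rfl]

lemma binom_mem_PTIdeal_of_mem_left {i : V} (hi : i ∈ T) (j : V) :
    binom K i j ∈ PTIdeal K G T :=
  Ideal.sub_mem _ (Ideal.mul_mem_right _ _ (X_mem_PTIdeal hi 0))
    (Ideal.mul_mem_left _ _ (X_mem_PTIdeal hi 1))

lemma binom_mem_PTIdeal_of_mem_right (i : V) {j : V} (hj : j ∈ T) :
    binom K i j ∈ PTIdeal K G T := by
  rw [← neg_neg (binom K i j), ← binom_swap]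
  exact neg_mem (binom_mem_PTIdeal_of_mem_left hj i)

lemma notMem_of_reachable_delV {i j : V} (h : (delV G T).Reachable i j) (hij : i ≠ j) :
    i ∉ T := by
  obtain ⟨_ | ⟨hadj, _⟩⟩ := h
  exacts [absurd rfl hij, hadj.2.1]

lemma binom_mem_PTIdeal {i j : V} (h : (delV G T).Reachable i j) :
    binom K i j ∈ PTIdeal K G T := by
  by_cases hij : i = j
  · rw [hij, binom_self]
    exact Ideal.zero_mem _
  exact Ideal.subset_span (Or.inr ⟨i, j, notMem_of_reachable_delV h hij,
    notMem_of_reachable_delV h.symm (Ne.symm hij), hij, h, rfl⟩)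

lemma beIdeal_le_PTIdeal [DecidableEq V] (G : SimpleGraph V) (T : Finset V) :
    beIdeal K G ≤ PTIdeal K G T := by
  refine beIdeal_le fun i j hij => ?_
  by_cases hi : i ∈ T
  · exact binom_mem_PTIdeal_of_mem_left hi j
  by_cases hj : j ∈ T
  · exact binom_mem_PTIdeal_of_mem_right i hj
  exact binom_mem_PTIdeal (SimpleGraph.Adj.reachable ⟨hij, hi, hj⟩)

end Ideals

section Graphs

open SimpleGraph

variable {V : Type*}

lemma delV_delV [DecidableEq V] (G : SimpleGraph V) (A B : Finset V) :
    delV (delV G A) B = delV G (A ∪ B) := by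
  ext i j
  simp only [delV, Finset.mem_union]
  tauto

lemma delV_empty (G : SimpleGraph V) : delV G ∅ = G := by
  ext i j
  simp [delV]

lemma delV_anti {G : SimpleGraph V} {T T' : Finset V} (h : T ⊆ T') : delV G T' ≤ delV G T :=
  fun _ _ hij => ⟨hij.1, fun hi => hij.2.1 (h hi), fun hj => hij.2.2 (h hj)⟩

lemma delV_mono {G G' : SimpleGraph V} (h : G ≤ G') (T : Finset V) : delV G T ≤ delV G' T :=
  fun _ _ hij => ⟨h hij.1, hij.2⟩

lemma reachable_delV_insert_of_notMem_support [DecidableEq V] {G : SimpleGraph V}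
    {U : Finset V} {i a b : V} (w : (delV G U).Walk a b) (hw : i ∉ w.support) :
    (delV G (insert i U)).Reachable a b := by
  induction w with
  | nil => exact .rfl
  | @cons x y _ hxy w ih =>
    rw [Walk.support_cons, List.mem_cons, not_or] at hw
    have hy : y ≠ i := fun h => hw.2 (h ▸ w.start_mem_support)
    have hadj : (delV G (insert i U)).Adj x y :=
      ⟨hxy.1, by simp [Ne.symm hw.1, hxy.2.1], by simp [hy, hxy.2.2]⟩
    exact hadj.reachable.trans (ih hw.2)

lemma adj_of_reachable {G : SimpleGraph V}
    (hG : ∀ a b c, G.Adj a b → G.Adj b c → a ≠ c → G.Adj a c)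
    {p q : V} (h : G.Reachable p q) (hpq : p ≠ q) : G.Adj p q := by
  obtain ⟨w⟩ := h
  induction w with
  | nil => exact absurd rfl hpq
  | @cons a b c hab w ih =>
    by_cases hbc : b = c
    · exact hbc ▸ hab
    · exact hG a b c hab (ih hbc) hpq

/-- A walk through `v` shortcuts along the edge between the two neighbours of `v` it uses. -/
lemma reachable_delV_singleton_of_isClique {H : SimpleGraph V} {v p q : V}
    (hN : H.IsClique (H.neighborSet v)) (hp : p ≠ v) (hq : q ≠ v) (h : H.Reachable p q) :
    (delV H {v}).Reachable p q := by
  obtain ⟨w⟩ := h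
  suffices key : ∀ {x y} (w : H.Walk x y), y ≠ v → (x ≠ v → (delV H {v}).Reachable x y) ∧
      (x = v → ∀ u, H.Adj v u → (delV H {v}).Reachable u y) from (key w hq).1 hp
  intro x y w hy
  induction w with
  | nil => exact ⟨fun _ => .rfl, fun hx => absurd hx hy⟩
  | @cons x z _ hxz _ ih =>
    replace ih := ih hy
    refine ⟨fun hx => ?_, ?_⟩
    · by_cases hz : z = v
      · exact ih.2 hz x (hz ▸ hxz.symm)
      · have hadj : (delV H {v}).Adj x z := ⟨hxz, by simpa using hx, by simpa using hz⟩
        exact hadj.reachable.trans (ih.1 hz)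
    · intro hx u hu
      subst x
      have hz : z ≠ v := hxz.ne.symm
      by_cases huz : u = z
      · exact huz ▸ ih.1 hz
      · have hadj : (delV H {v}).Adj u z := ⟨hN hu hxz huz, by simpa using hu.ne.symm,
          by simpa using hz⟩
        exact hadj.reachable.trans (ih.1 hz)

/-- The graph `G_v` of Ohtani's lemma. -/
def cliqueAt (G : SimpleGraph V) (v : V) : SimpleGraph V where
  Adj a b := G.Adj a b ∨ (a ≠ b ∧ G.Adj a v ∧ G.Adj b v)
  symm := ⟨by
    rintro a b (h | ⟨hab, ha, hb⟩)
    exacts [Or.inl h.symm, Or.inr ⟨hab.symm, hb, ha⟩]⟩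
  loopless := ⟨by
    rintro a (h | ⟨h, -⟩)
    exacts [G.loopless.irrefl a h, h rfl]⟩

lemma le_cliqueAt (G : SimpleGraph V) (v : V) : G ≤ cliqueAt G v := fun _ _ => Or.inl

lemma cliqueAt_adj_right {G : SimpleGraph V} {v a : V} :
    (cliqueAt G v).Adj a v ↔ G.Adj a v :=
  ⟨fun h => h.elim id fun h => absurd h.2.2 (G.loopless.irrefl v), Or.inl⟩

lemma reachable_delV_cliqueAt_of_erase [DecidableEq V] {G : SimpleGraph V} {v p q : V}
    {T : Finset V} (hp : p ∉ T) (hq : q ∉ T)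
    (h : (delV (cliqueAt G v) (T.erase v)).Reachable p q) :
    (delV (cliqueAt G v) T).Reachable p q := by
  by_cases hv : v ∈ T
  · have hpv : p ≠ v := fun h => hp (h ▸ hv)
    have hqv : q ≠ v := fun h => hq (h ▸ hv)
    rw [← Finset.insert_erase hv, Finset.insert_eq, Finset.union_comm, ← delV_delV]
    refine reachable_delV_singleton_of_isClique (fun a ha b hb hab => ?_) hpv hqv h
    exact ⟨Or.inr ⟨hab, cliqueAt_adj_right.1 ha.1.symm, cliqueAt_adj_right.1 hb.1.symm⟩,
      ha.2.2, hb.2.2⟩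
  · rwa [Finset.erase_eq_of_notMem hv] at h

end Graphs

section KillVertex

variable {K : Type*} [Field K] {V : Type*}

lemma X_mem_span_xv_yv {v : V} {w : Fin 2 × V} (hw : w.2 = v) :
    X w ∈ Ideal.span {xv K v, yv K v} := by
  obtain ⟨a, i⟩ := w
  obtain rfl : i = v := hw
  fin_cases a
  exacts [Ideal.subset_span (Set.mem_insert _ _), Ideal.subset_span (Set.mem_insert_of_mem _ rfl)]

variable [DecidableEq V]

noncomputable def killV (v : V) : MvPolynomial (Fin 2 × V) K →ₐ[K] MvPolynomial (Fin 2 × V) K :=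
  aeval fun w => if w.2 = v then 0 else X w

lemma killV_X (v : V) (w : Fin 2 × V) :
    killV (K := K) v (X w) = if w.2 = v then 0 else X w :=
  aeval_X _ _

lemma killV_binom (v i j : V) :
    killV v (binom K i j) = if i = v ∨ j = v then 0 else binom K i j := by
  simp only [binom, xv, yv, map_sub, map_mul, killV_X]
  by_cases hi : i = v <;> by_cases hj : j = v <;> simp [hi, hj]

lemma sub_killV_mem_span (v : V) (f : MvPolynomial (Fin 2 × V) K) :
    f - killV v f ∈ Ideal.span {xv K v, yv K v} := by
  induction f using MvPolynomial.induction_on with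
  | C a => simp [killV]
  | add f g hf hg =>
    rw [map_add, add_sub_add_comm]
    exact Ideal.add_mem _ hf hg
  | mul_X f w hf =>
    have hX : X w - killV (K := K) v (X w) ∈ Ideal.span {xv K v, yv K v} := by
      rw [killV_X]
      split_ifs with hw
      · simpa using X_mem_span_xv_yv hw
      · simp
    rw [map_mul, show f * X w - killV v f * killV v (X w) =
      (f - killV v f) * X w + killV v f * (X w - killV v (X w)) by ring]
    exact Ideal.add_mem _ (Ideal.mul_mem_right _ _ hf) (Ideal.mul_mem_left _ _ hX)

lemma killV_mem_beIdeal_delV {G : SimpleGraph V} {v : V} {f : MvPolynomial (Fin 2 × V) K}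
    (hf : f ∈ beIdeal K G) : killV v f ∈ beIdeal K (delV G {v}) := by
  refine beIdeal_le (I := (beIdeal K (delV G {v})).comap (killV v)) (fun i j hij => ?_) hf
  rw [Ideal.mem_comap, killV_binom]
  split_ifs with h
  · exact Ideal.zero_mem _
  · rw [not_or] at h
    exact binom_mem_beIdeal ⟨hij, by simpa using h.1, by simpa using h.2⟩

lemma killV_mem_PTIdeal_delV {G : SimpleGraph V} {v : V} {W : Finset V}
    {f : MvPolynomial (Fin 2 × V) K} (hf : f ∈ PTIdeal K G (insert v W)) :
    killV v f ∈ PTIdeal K (delV G {v}) W := by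
  refine PTIdeal_le (I := (PTIdeal K (delV G {v}) W).comap (killV v)) (fun i hi a => ?_)
    (fun i j hi hj hij => ?_) hf
  · rw [Ideal.mem_comap, killV_X]
    split_ifs with hiv
    · exact Ideal.zero_mem _
    · exact X_mem_PTIdeal ((Finset.mem_insert.1 hi).resolve_left hiv) a
  · rw [Ideal.mem_comap, killV_binom, if_neg]
    · rw [Finset.insert_eq, ← delV_delV] at hij
      exact binom_mem_PTIdeal hij
    · rintro (rfl | rfl)
      exacts [hi (Finset.mem_insert_self _ _), hj (Finset.mem_insert_self _ _)]

end KillVertex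

section Ohtani

open SimpleGraph

variable {K : Type*} [Field K] {V : Type*}

def neighborBinoms (K : Type*) [Field K] (G : SimpleGraph V) (v : V) :
    Set (MvPolynomial (Fin 2 × V) K) :=
  {f | ∃ a b, G.Adj a v ∧ G.Adj b v ∧ f = binom K a b}

lemma beIdeal_cliqueAt_le (G : SimpleGraph V) (v : V) :
    beIdeal K (cliqueAt G v) ≤ beIdeal K G ⊔ Ideal.span (neighborBinoms K G v) :=
  beIdeal_le fun a b h => h.elim (fun h => Ideal.mem_sup_left (binom_mem_beIdeal h))
    fun h => Ideal.mem_sup_right (Ideal.subset_span ⟨a, b, h.2.1, h.2.2, rfl⟩)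

lemma span_xv_yv_mul_span_neighborBinoms_le (G : SimpleGraph V) (v : V) :
    Ideal.span {xv K v, yv K v} * Ideal.span (neighborBinoms K G v) ≤ beIdeal K G := by
  rw [Ideal.span_mul_span, Ideal.span_le]
  rintro _ ⟨z, hz, _, ⟨a, b, ha, hb, rfl⟩, rfl⟩
  obtain ⟨c, rfl⟩ : ∃ c : Fin 2, z = X (c, v) := by
    rcases hz with rfl | rfl
    exacts [⟨0, rfl⟩, ⟨1, rfl⟩]
  show X (c, v) * binom K a b ∈ beIdeal K G
  rw [X_mul_binom]
  exact add_mem (Ideal.mul_mem_left _ _ (binom_mem_beIdeal hb.symm))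
    (Ideal.mul_mem_left _ _ (binom_mem_beIdeal ha))

variable [DecidableEq V]

/-- A form of Ohtani's lemma `J_G = J_{G_v} ∩ ((x_v, y_v) + J_{G - v})`. -/
lemma mem_beIdeal_of_mem_cliqueAt {G : SimpleGraph V} {v : V} {f : MvPolynomial (Fin 2 × V) K}
    (hf : f ∈ beIdeal K (cliqueAt G v)) (hκ : killV v f ∈ beIdeal K (delV G {v})) :
    f ∈ beIdeal K G := by
  have hdel : beIdeal K (delV G {v}) ≤ beIdeal K G := beIdeal_mono fun _ _ h => h.1
  have hfix : ∀ s ∈ neighborBinoms K G v, killV v s = s := by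
    rintro _ ⟨a, b, ha, hb, rfl⟩
    rw [killV_binom, if_neg]
    rintro (rfl | rfl)
    exacts [G.loopless.irrefl _ ha, G.loopless.irrefl _ hb]
  obtain ⟨u, hu, m, hm, rfl⟩ := Submodule.mem_sup.1 (beIdeal_cliqueAt_le G v hf)
  have hm' : m - killV v m ∈ beIdeal K G := span_xv_yv_mul_span_neighborBinoms_le G v
    (sub_map_mem_mul_span (killV v) hfix (sub_killV_mem_span v) hm)
  rw [show u + m = (u - killV v u) + (m - killV v m) + killV v (u + m) by rw [map_add]; ring]
  exact add_mem (add_mem (sub_mem hu (hdel (killV_mem_beIdeal_delV hu))) hm') (hdel hκ)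

lemma PTIdeal_erase_le_cliqueAt (G : SimpleGraph V) (v : V) (T : Finset V) :
    PTIdeal K G (T.erase v) ≤ PTIdeal K (cliqueAt G v) T := by
  refine PTIdeal_le (fun i hi a => X_mem_PTIdeal (Finset.mem_of_mem_erase hi) a)
    fun i j _ _ hij => ?_
  by_cases hi : i ∈ T
  · exact binom_mem_PTIdeal_of_mem_left hi j
  by_cases hj : j ∈ T
  · exact binom_mem_PTIdeal_of_mem_right i hj
  exact binom_mem_PTIdeal (reachable_delV_cliqueAt_of_erase hi hj
    (hij.mono (delV_mono (le_cliqueAt G v) _)))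

end Ohtani

section Induction

open SimpleGraph

variable {K : Type*} [Field K] {V : Type*}

lemma PTIdeal_empty_le_beIdeal {G : SimpleGraph V}
    (hG : ∀ a b c, G.Adj a b → G.Adj b c → a ≠ c → G.Adj a c) :
    PTIdeal K G ∅ ≤ beIdeal K G := by
  refine PTIdeal_le (by simp) fun i j _ _ hij => ?_
  by_cases h : i = j
  · rw [h, binom_self]
    exact Ideal.zero_mem _
  · rw [delV_empty] at hij
    exact binom_mem_beIdeal (adj_of_reachable hG hij h)

def nonAdjPairs (G : SimpleGraph V) : Set (V × V) :=
  {p | p.1 ∈ G.support ∧ p.2 ∈ G.support ∧ ¬ G.Adj p.1 p.2}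

lemma support_cliqueAt_subset (G : SimpleGraph V) (v : V) :
    (cliqueAt G v).support ⊆ G.support := by
  rintro a ⟨b, h | ⟨-, h, -⟩⟩
  exacts [⟨b, h⟩, ⟨v, h⟩]

lemma nonAdjPairs_cliqueAt_ssubset {G : SimpleGraph V} {v a b : V} (ha : G.Adj a v)
    (hb : G.Adj b v) (hab : a ≠ b) (hnab : ¬ G.Adj a b) :
    nonAdjPairs (cliqueAt G v) ⊂ nonAdjPairs G := by
  refine (Set.ssubset_iff_of_subset ?_).2
    ⟨(a, b), ⟨⟨v, ha⟩, ⟨v, hb⟩, hnab⟩, fun h => h.2.2 (Or.inr ⟨hab, ha, hb⟩)⟩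
  rintro ⟨p, q⟩ ⟨hp, hq, hpq⟩
  exact ⟨support_cliqueAt_subset G v hp, support_cliqueAt_subset G v hq, fun h => hpq (Or.inl h)⟩

lemma nonAdjPairs_delV_ssubset {G : SimpleGraph V} {v : V} (hv : v ∈ G.support) :
    nonAdjPairs (delV G {v}) ⊂ nonAdjPairs G := by
  refine (Set.ssubset_iff_of_subset ?_).2 ⟨(v, v), ⟨hv, hv, G.loopless.irrefl v⟩, ?_⟩
  · rintro ⟨p, q⟩ ⟨⟨u, hpu⟩, ⟨u', hqu⟩, hpq⟩
    exact ⟨⟨u, hpu.1⟩, ⟨u', hqu.1⟩, fun h => hpq ⟨h, hpu.2.1, hqu.2.1⟩⟩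
  · rintro ⟨⟨u, hu⟩, -⟩
    exact hu.2.1 (Finset.mem_singleton_self v)

theorem iInf_PTIdeal_le_beIdeal [Finite V] [DecidableEq V]
    (G : SimpleGraph V) : ⨅ T, PTIdeal K G T ≤ beIdeal K G := by
  induction hN : (nonAdjPairs G).ncard using Nat.strong_induction_on generalizing G with
  | _ N ih =>
  have ih' : ∀ H, nonAdjPairs H ⊂ nonAdjPairs G → ⨅ T, PTIdeal K H T ≤ beIdeal K H :=
    fun H hH => ih _ (hN ▸ Set.ncard_lt_ncard hH) H rfl
  by_cases hG : ∀ a b c, G.Adj a b → G.Adj b c → a ≠ c → G.Adj a c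
  · exact (iInf_le _ ∅).trans (PTIdeal_empty_le_beIdeal hG)
  simp only [not_forall] at hG
  obtain ⟨a, v, b, hav, hvb, hab, hnab⟩ := hG
  intro f hf
  rw [Submodule.mem_iInf] at hf
  refine mem_beIdeal_of_mem_cliqueAt (v := v) ?_ ?_
  · refine ih' _ (nonAdjPairs_cliqueAt_ssubset hav hvb.symm hab hnab) ?_
    exact (Submodule.mem_iInf _).2 fun T => PTIdeal_erase_le_cliqueAt G v T (hf (T.erase v))
  · refine ih' _ (nonAdjPairs_delV_ssubset ⟨b, hvb⟩) ?_
    exact (Submodule.mem_iInf _).2 fun W => killV_mem_PTIdeal_delV (hf (insert v W))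

end Induction

section CutPoint

open SimpleGraph

variable {V : Type*}

lemma cCount_eq_ncard (G : SimpleGraph V) (T : Finset V) :
    cCount G T = ((delV G T).connectedComponentMk '' (↑T)ᶜ).ncard :=
  Nat.card_coe_set_eq _

variable [DecidableEq V]

lemma cCount_erase_lt [Finite V] {G : SimpleGraph V} {T : Finset V} {i a b : V} (hi : i ∈ T)
    (ha : a ∉ T) (hb : b ∉ T) (hab : (delV G (T.erase i)).Reachable a b)
    (hnab : ¬ (delV G T).Reachable a b) : cCount G (T.erase i) < cCount G T := by
  set H := delV G T
  set H' := delV G (T.erase i)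
  have hai : H'.Reachable a i := by
    obtain ⟨w⟩ := hab
    by_cases hiw : i ∈ w.support
    · exact ⟨w.takeUntil i hiw⟩
    · have := reachable_delV_insert_of_notMem_support w hiw
      rw [Finset.insert_erase hi] at this
      exact absurd this hnab
  let f := ConnectedComponent.map (Hom.ofLE (delV_anti (Finset.erase_subset i T)) : H →g H')
  have hf : ∀ x, f (H.connectedComponentMk x) = H'.connectedComponentMk x := fun _ => rfl
  have himage : H'.connectedComponentMk '' (↑(T.erase i))ᶜ =
      f '' (H.connectedComponentMk '' (↑T)ᶜ) := by
    rw [Set.image_image]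
    simp_rw [hf]
    refine subset_antisymm ?_ (Set.image_mono fun x hx h => hx (Finset.mem_of_mem_erase h))
    rintro _ ⟨x, hx, rfl⟩
    by_cases hxT : x ∈ T
    · obtain rfl : x = i := by
        by_contra h
        exact hx (Finset.mem_erase.2 ⟨h, hxT⟩)
      exact ⟨a, ha, ConnectedComponent.sound hai⟩
    · exact ⟨x, hxT, rfl⟩
  have hninj : ¬ Set.InjOn f (H.connectedComponentMk '' (↑T)ᶜ) := fun hinj =>
    hnab (ConnectedComponent.exact (hinj ⟨a, ha, rfl⟩ ⟨b, hb, rfl⟩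
      (by rw [hf, hf]; exact ConnectedComponent.sound hab)))
  rw [cCount_eq_ncard, cCount_eq_ncard, himage]
  exact (Set.ncard_image_le (Set.toFinite _)).lt_of_ne
    fun h => hninj (Set.injOn_of_ncard_image_eq h)

variable {K : Type*} [Field K]

lemma PTIdeal_erase_le_of_not_cCount_lt [Finite V] {G : SimpleGraph V} {T : Finset V} {i : V}
    (hi : i ∈ T) (h : ¬ cCount G (T.erase i) < cCount G T) :
    PTIdeal K G (T.erase i) ≤ PTIdeal K G T := by
  refine PTIdeal_le (fun j hj a => X_mem_PTIdeal (Finset.mem_of_mem_erase hj) a)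
    fun p q _ _ hpq => ?_
  by_cases hp : p ∈ T
  · exact binom_mem_PTIdeal_of_mem_left hp q
  by_cases hq : q ∈ T
  · exact binom_mem_PTIdeal_of_mem_right p hq
  by_cases hr : (delV G T).Reachable p q
  · exact binom_mem_PTIdeal hr
  · exact absurd (cCount_erase_lt hi hp hq hpq hr) h

lemma exists_hasCutPointProperty_PTIdeal_le [Finite V] (G : SimpleGraph V) (T : Finset V) :
    ∃ T', hasCutPointProperty G T' ∧ PTIdeal K G T' ≤ PTIdeal K G T := by
  induction T using Finset.strongInduction with
  | _ T ih =>
  by_cases h : hasCutPointProperty G T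
  · exact ⟨T, h, le_rfl⟩
  simp only [hasCutPointProperty, not_forall] at h
  obtain ⟨i, hi, hnot⟩ := h
  obtain ⟨T', hT', hle⟩ := ih (T.erase i) (Finset.erase_ssubset hi)
  exact ⟨T', hT', hle.trans (PTIdeal_erase_le_of_not_cCount_lt hi hnot)⟩

end CutPoint

section Segre

open SimpleGraph

variable {K : Type*} [Field K] {V : Type*} (G : SimpleGraph V) (T : Finset V)

/-- `Sum.inl (0, C)`, `Sum.inl (1, C)` and `Sum.inr i` stand for variables `s_C`, `u_C` and `t_i`;
this is the exponent of the image `s_C t_i` of `x_i` (or `u_C t_i` of `y_i`), where `C` is the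
component of `i` in `G - T`. -/
noncomputable def segreExp (w : Fin 2 × V) : (Fin 2 × (delV G T).ConnectedComponent) ⊕ V →₀ ℕ :=
  Finsupp.single (.inl (w.1, (delV G T).connectedComponentMk w.2)) 1 + Finsupp.single (.inr w.2) 1

noncomputable def segreHom [DecidableEq V] : MvPolynomial (Fin 2 × V) K →ₐ[K]
    MvPolynomial ((Fin 2 × (delV G T).ConnectedComponent) ⊕ V) K :=
  aeval fun w => if w.2 ∈ T then 0 else monomial (segreExp G T w) 1

def VarsAvoid (d : Fin 2 × V →₀ ℕ) : Prop := ∀ w : Fin 2 × V, w.2 ∈ T → d w = 0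

variable {G T}

lemma segreExp_ne_zero (w : Fin 2 × V) : segreExp G T w ≠ 0 := by
  simp [segreExp]

lemma monomial_mem_PTIdeal {d : Fin 2 × V →₀ ℕ} (hd : ¬ VarsAvoid T d) :
    monomial d (1 : K) ∈ PTIdeal K G T := by
  simp only [VarsAvoid, not_forall] at hd
  obtain ⟨w, hwT, hw⟩ := hd
  exact Ideal.mem_of_dvd _ (X_dvd_monomial.2 (Or.inr hw)) (X_mem_PTIdeal hwT w.1)

lemma X_mul_X_sub_mem_PTIdeal {i j : V} (h : (delV G T).Reachable i j) (a b : Fin 2) :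
    X (a, i) * X (b, j) - X (a, j) * X (b, i) ∈ PTIdeal K G T := by
  obtain ⟨c, hc⟩ : ∃ c, X (a, i) * X (b, j) - X (a, j) * X (b, i) = c * binom K i j := by
    fin_cases a <;> fin_cases b <;> simp only [binom, xv, yv, Fin.zero_eta, Fin.mk_one]
    exacts [⟨0, by ring⟩, ⟨1, by ring⟩, ⟨-1, by ring⟩, ⟨0, by ring⟩]
  rw [hc]
  exact Ideal.mul_mem_left _ _ (binom_mem_PTIdeal h)

lemma VarsAvoid.of_add {d e : Fin 2 × V →₀ ℕ} (h : VarsAvoid T (d + e)) : VarsAvoid T e :=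
  fun w hw => (Nat.add_eq_zero_iff.1 (h w hw)).2

lemma exists_exchange_partners {d d' : Fin 2 × V →₀ ℕ}
    (h : Finsupp.linearCombination ℕ (segreExp G T) d =
      Finsupp.linearCombination ℕ (segreExp G T) d')
    {a : Fin 2} {i : V} (hw : (a, i) ∈ d.support) (hw' : (a, i) ∉ d'.support) :
    ∃ b j, (b, i) ∈ d'.support ∧ (a, j) ∈ d'.support ∧ i ≠ j ∧ (delV G T).Reachable i j := by
  -- `t_i` and `s_C` (or `u_C`), `C` the component of `i`, divide the common image.
  have hpos : ∀ y, segreExp G T (a, i) y ≠ 0 → ∃ u ∈ d'.support, segreExp G T u y ≠ 0 :=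
    fun y hy => Finsupp.exists_mem_support_of_linearCombination_ne_zero _ <| h ▸
      ((Nat.pos_of_ne_zero hy).trans_le
        (Finsupp.le_def.1 (Finsupp.le_linearCombination _ hw) y)).ne'
  obtain ⟨⟨b, i'⟩, hbi, hi'⟩ := hpos (.inr i) (by simp [segreExp])
  obtain hi' : i = i' := by simpa [segreExp, Finsupp.single_apply_ne_zero] using hi'
  subst i'
  obtain ⟨⟨a', j⟩, haj, hj⟩ := hpos (.inl (a, (delV G T).connectedComponentMk i))
    (by simp [segreExp])
  obtain ⟨ha', hij⟩ : a = a' ∧ (delV G T).Reachable i j := by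
    simpa [segreExp, Finsupp.single_apply_ne_zero] using hj
  subst a'
  refine ⟨b, j, hbi, haj, ?_, hij⟩
  rintro rfl
  exact hw' haj

variable [DecidableEq V]

lemma segreHom_monomial {d : Fin 2 × V →₀ ℕ} (hd : VarsAvoid T d) :
    segreHom G T (monomial d (1 : K)) =
      monomial (Finsupp.linearCombination ℕ (segreExp G T) d) 1 := by
  rw [segreHom, aeval_monomial, map_one, one_mul, Finsupp.linearCombination_apply,
    monomial_finsupp_sum_index, C_1, one_mul]
  refine Finsupp.prod_congr fun w hw => ?_
  rw [if_neg fun hT => Finsupp.mem_support_iff.1 hw (hd w hT), monomial_pow, one_pow]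

lemma segreHom_monomial_eq_zero {d : Fin 2 × V →₀ ℕ} (hd : ¬ VarsAvoid T d) :
    segreHom G T (monomial d (1 : K)) = 0 := by
  simp only [VarsAvoid, not_forall] at hd
  obtain ⟨w, hwT, hw⟩ := hd
  rw [segreHom, aeval_monomial, Finsupp.prod,
    Finset.prod_eq_zero (Finsupp.mem_support_iff.2 hw) (by rw [if_pos hwT, zero_pow hw]),
    mul_zero]

lemma PTIdeal_le_ker_segreHom : PTIdeal K G T ≤ RingHom.ker (segreHom (K := K) G T) := by
  refine PTIdeal_le (fun i hi a => by simp [RingHom.mem_ker, segreHom, hi]) fun i j hi hj hij => ?_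
  have hc := ConnectedComponent.sound hij
  simp only [RingHom.mem_ker, binom, xv, yv, map_sub, map_mul, segreHom, aeval_X, if_neg hi,
    if_neg hj, monomial_mul, segreExp, hc, sub_eq_zero]
  congr 2
  abel

/-- One exchange `X (b, i) X (a, j) ↦ X (a, i) X (b, j)` along a path `i — j` of `G - T` makes
the monomial `d'` share the variable `w = (a, i)` of `d`. -/
lemma exists_exchange_mem_support {d d' : Fin 2 × V →₀ ℕ} (hd : VarsAvoid T d)
    (hd' : VarsAvoid T d')
    (h : Finsupp.linearCombination ℕ (segreExp G T) d =
      Finsupp.linearCombination ℕ (segreExp G T) d')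
    {w : Fin 2 × V} (hw : w ∈ d.support) :
    ∃ d'', VarsAvoid T d'' ∧ Finsupp.linearCombination ℕ (segreExp G T) d'' =
      Finsupp.linearCombination ℕ (segreExp G T) d' ∧
      monomial d' (1 : K) - monomial d'' 1 ∈ PTIdeal K G T ∧ w ∈ d''.support := by
  by_cases hw' : w ∈ d'.support
  · exact ⟨d', hd', rfl, by simp, hw'⟩
  obtain ⟨a, i⟩ := w
  obtain ⟨b, j, hbi, haj, hne, hij⟩ := exists_exchange_partners h hw hw'
  have hiT : i ∉ T := fun hT => Finsupp.mem_support_iff.1 hw (hd _ hT)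
  have hjT : j ∉ T := fun hT => Finsupp.mem_support_iff.1 haj (hd' _ hT)
  obtain ⟨d₁, rfl⟩ := Finsupp.exists_eq_single_add hbi
  obtain ⟨d₂, rfl⟩ := Finsupp.exists_eq_single_add (w := (a, j)) (d := d₁) (by
    simpa [Finsupp.single_apply, hne] using haj)
  refine ⟨Finsupp.single (a, i) 1 + (Finsupp.single (b, j) 1 + d₂), fun u hu => ?_, ?_, ?_,
    by simp⟩
  · have hui : (a, i) ≠ u := by
      rintro rfl
      exact hiT hu
    have huj : (b, j) ≠ u := by
      rintro rfl
      exact hjT hu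
    simp [hui, huj, hd'.of_add.of_add u hu]
  · simp only [map_add, Finsupp.linearCombination_single, one_smul, segreExp,
      ConnectedComponent.sound hij]
    abel
  · have hx := X_mul_X_sub_mem_PTIdeal (K := K) hij b a
    rw [mul_comm (X (b, j))] at hx
    simp only [monomial_single_add, pow_one, ← mul_assoc, ← sub_mul]
    exact Ideal.mul_mem_right _ _ hx

lemma monomial_sub_monomial_mem_PTIdeal {d d' : Fin 2 × V →₀ ℕ} (hd : VarsAvoid T d)
    (hd' : VarsAvoid T d') (h : Finsupp.linearCombination ℕ (segreExp G T) d =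
      Finsupp.linearCombination ℕ (segreExp G T) d') :
    monomial d (1 : K) - monomial d' 1 ∈ PTIdeal K G T := by
  induction d using WellFoundedLT.induction generalizing d' with
  | _ d ih =>
  rcases d.support.eq_empty_or_nonempty with hd0 | ⟨w, hw⟩
  · rw [Finsupp.support_eq_empty.1 hd0, map_zero, eq_comm] at h
    rw [Finsupp.support_eq_empty.1 hd0,
      Finsupp.eq_zero_of_linearCombination_eq_zero segreExp_ne_zero h, sub_self]
    exact zero_mem _
  obtain ⟨d'', hd'', hF, hmem, hw''⟩ := exists_exchange_mem_support (K := K) hd hd' h hw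
  obtain ⟨d₀, rfl⟩ := Finsupp.exists_eq_single_add hw
  obtain ⟨d₀'', rfl⟩ := Finsupp.exists_eq_single_add hw''
  have h₀ : Finsupp.linearCombination ℕ (segreExp G T) d₀ =
      Finsupp.linearCombination ℕ (segreExp G T) d₀'' := by
    simpa only [map_add, add_right_inj] using h.trans hF.symm
  have hlt : d₀ < Finsupp.single w 1 + d₀ := lt_add_of_pos_left _ (by simp [pos_iff_ne_zero])
  have := ih d₀ hlt hd.of_add hd''.of_add h₀
  rw [show monomial (Finsupp.single w 1 + d₀) (1 : K) - monomial d' 1 =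
      X w * (monomial d₀ 1 - monomial d₀'' 1) -
        (monomial d' 1 - monomial (Finsupp.single w 1 + d₀'') 1)
    by simp only [monomial_single_add, pow_one]; ring]
  exact sub_mem (Ideal.mul_mem_left _ _ this) hmem

theorem PTIdeal_eq_ker_segreHom : PTIdeal K G T = RingHom.ker (segreHom (K := K) G T) :=
  le_antisymm PTIdeal_le_ker_segreHom fun _ hf =>
    MvPolynomial.ker_le_of_map_monomial (segreHom G T).toLinearMap (VarsAvoid T) _
      (fun _ => segreHom_monomial) (fun _ => segreHom_monomial_eq_zero)
      (fun _ => monomial_mem_PTIdeal) (fun _ _ => monomial_sub_monomial_mem_PTIdeal) hf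

theorem PTIdeal_isPrime (G : SimpleGraph V) (T : Finset V) : (PTIdeal K G T).IsPrime := by
  rw [PTIdeal_eq_ker_segreHom]
  exact RingHom.ker_isPrime _

end Segre

/-- `J_G` is a radical ideal and
`J_G = ⋂_{T ∈ C(G)} P_T(G)`, where `C(G)` is the family of subsets with the cut point
property for `G`. -/
theorem beIdeal_radical_decomposition (K : Type*) [Field K] (n : ℕ)
    (G : SimpleGraph (Fin n)) :
    (beIdeal K G).IsRadical ∧
      beIdeal K G = ⨅ T ∈ {T : Finset (Fin n) | hasCutPointProperty G T}, PTIdeal K G T := by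
  have heq : beIdeal K G = ⨅ T ∈ {T : Finset (Fin n) | hasCutPointProperty G T},
      PTIdeal K G T := by
    refine le_antisymm (le_iInf₂ fun T _ => beIdeal_le_PTIdeal G T) ?_
    refine le_trans (le_iInf fun T => ?_) (iInf_PTIdeal_le_beIdeal G)
    obtain ⟨T', hT', hle⟩ := exists_hasCutPointProperty_PTIdeal_le (K := K) G T
    exact (iInf₂_le T' hT').trans hle
  refine ⟨?_, heq⟩
  rw [heq]
  exact Ideal.isRadical_iInf _ fun T =>
    Ideal.isRadical_iInf _ fun _ => (PTIdeal_isPrime G T).isRadical
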